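/- arXiv:1605.08023 — 6 statements merged into one kernel-verified Lean document; each statement's English description precedes it below -/
import Mathlib

section
/- For every v₁ ∈ {1,…,V} and every physical node n ∈ {1,…,N}, the conditionally optimal cost satisfies the Bellman recurrence: J*(v₁ | n) equals the minimum, over v_s ∈ {1,…,v₁} and (when v_s > 1) over m ∈ {1,…,n−1}, of max( J*(v_s − 1 | m) ; max over resource types k of Σ_{v = v_s}^{v₁} d(v,n,k) ; c(v_s, m, n) ; max over v_s + 1 ≤ v ≤ v₁ of c(v,n,n) ), where for v_s = 1 the terms J*(v_s − 1 | m) and c(v_s, m, n) are omitted (taken to be 0) and no minimization over m is performed, and a minimum over an empty set is +∞. -/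
open scoped ENNReal BigOperators

/-- The cost `J_π(v₁)` of a placement `π` of application nodes `1,…,v₁` (of a linear
application graph) onto physical nodes `1,…,N`, with `K` resource types, node-placement
costs `d v n k` and pairwise costs `c v n₁ n₂` (cost of placing node `v-1` on `n₁` and
node `v` on `n₂`, for `2 ≤ v`). -/
noncomputable def lineCost (N K : ℕ) (d : ℕ → ℕ → ℕ → ℝ≥0∞) (c : ℕ → ℕ → ℕ → ℝ≥0∞)
    (v₁ : ℕ) (π : ℕ → ℕ) : ℝ≥0∞ :=
  max
    (⨆ k ∈ Finset.Icc 1 K, ⨆ n ∈ Finset.Icc 1 N,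
      ∑ v ∈ (Finset.Icc 1 v₁).filter (fun v => π v = n), d v n k)
    (⨆ v ∈ Finset.Icc 2 v₁, c v (π (v - 1)) (π v))

/-- The conditionally optimal cost `J*(v₁ | n)`: the infimum of `J_π(v₁)` over all
cycle-free (nondecreasing) placements `π : {1,…,v₁} → {1,…,N}` with `π v₁ = n`,
with the convention `J*(0 | n) = 0`.  (An infimum over an empty set is `+∞`.) -/
noncomputable def lineOpt (N K : ℕ) (d : ℕ → ℕ → ℕ → ℝ≥0∞) (c : ℕ → ℕ → ℕ → ℝ≥0∞)
    (v₁ n : ℕ) : ℝ≥0∞ :=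
  if v₁ = 0 then 0
  else
    ⨅ π ∈ {π : ℕ → ℕ |
        (∀ v ∈ Finset.Icc 1 v₁, π v ∈ Finset.Icc 1 N) ∧
        (∀ v w, 1 ≤ v → v ≤ w → w ≤ v₁ → π v ≤ π w) ∧
        π v₁ = n},
      lineCost N K d c v₁ π

/-!
Split a placement ending at `n` at the first application node `vs` placed on `n`. By
monotonicity, `vs, …, v₁` all sit on `n` and every earlier node sits on some `m < n`. Hence the
load of `n` comes only from the tail, the loads of the other physical nodes only from the head,
and the pairwise costs split into those of the head, the crossing edge `(vs - 1, vs)` and the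
tail edges, all on `(n, n)`. Conversely, every placement of the head ending at some `m < n`
extends by `n` on the tail.
-/

section LinePlacement

variable {N K : ℕ} {d : ℕ → ℕ → ℕ → ℝ≥0∞} {c : ℕ → ℕ → ℕ → ℝ≥0∞}

noncomputable def resourceLoad (N K : ℕ) (d : ℕ → ℕ → ℕ → ℝ≥0∞) (u : ℕ) (π : ℕ → ℕ) : ℝ≥0∞ :=
  ⨆ k ∈ Finset.Icc 1 K, ⨆ n ∈ Finset.Icc 1 N,
    ∑ v ∈ (Finset.Icc 1 u).filter (fun v => π v = n), d v n k

noncomputable def pairCost (c : ℕ → ℕ → ℕ → ℝ≥0∞) (u : ℕ) (π : ℕ → ℕ) : ℝ≥0∞ :=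
  ⨆ v ∈ Finset.Icc 2 u, c v (π (v - 1)) (π v)

theorem lineCost_eq_max (u : ℕ) (π : ℕ → ℕ) :
    lineCost N K d c u π = max (resourceLoad N K d u π) (pairCost c u π) := rfl

theorem biSup_ite_eq_of_mem {ι α : Type*} [DecidableEq ι] [CompleteLattice α] {s : Finset ι}
    {i : ι} (hi : i ∈ s) (x : α) : ⨆ j ∈ s, (if j = i then x else ⊥) = x :=
  le_antisymm (iSup₂_le fun j _ => by split_ifs <;> simp)
    (le_iSup₂_of_le i hi (by simp))

variable {u vs n : ℕ} {π : ℕ → ℕ}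

theorem resourceLoad_split (hn : n ∈ Finset.Icc 1 N) (h1 : 1 ≤ vs) (h2 : vs ≤ u)
    (htail : ∀ v, vs ≤ v → v ≤ u → π v = n) (hhead : ∀ v, 1 ≤ v → v < vs → π v ≠ n) :
    resourceLoad N K d u π =
      max (resourceLoad N K d (vs - 1) π)
        (⨆ k ∈ Finset.Icc 1 K, ∑ v ∈ Finset.Icc vs u, d v n k) := by
  have hfilter_n : (Finset.Icc 1 u).filter (fun v => π v = n) = Finset.Icc vs u := by
    ext v
    have := htail v; have := hhead v
    simp only [Finset.mem_filter, Finset.mem_Icc]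
    omega
  have hfilter_head_n : (Finset.Icc 1 (vs - 1)).filter (fun v => π v = n) = ∅ := by
    ext v
    have := hhead v
    simp only [Finset.mem_filter, Finset.mem_Icc, Finset.notMem_empty, iff_false]
    omega
  have hfilter_ne : ∀ n', n' ≠ n → (Finset.Icc 1 u).filter (fun v => π v = n') =
      (Finset.Icc 1 (vs - 1)).filter (fun v => π v = n') := by
    intro n' hn'
    ext v
    have := htail v
    simp only [Finset.mem_filter, Finset.mem_Icc]
    omega
  calc resourceLoad N K d u π
      = ⨆ k ∈ Finset.Icc 1 K, ⨆ n' ∈ Finset.Icc 1 N,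
          max (∑ v ∈ (Finset.Icc 1 (vs - 1)).filter (fun v => π v = n'), d v n' k)
            (if n' = n then ∑ v ∈ Finset.Icc vs u, d v n k else ⊥) := by
        refine biSup_congr fun k _ => biSup_congr fun n' _ => ?_
        rcases eq_or_ne n' n with rfl | hn'
        · simp [hfilter_n, hfilter_head_n]
        · simp [hfilter_ne n' hn', hn']
    _ = _ := by simp only [iSup_sup_eq, biSup_ite_eq_of_mem hn]; rfl

theorem pairCost_split (h1 : 1 ≤ vs) (h2 : vs ≤ u) (htail : ∀ v, vs ≤ v → v ≤ u → π v = n) :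
    pairCost c u π = max (pairCost c (vs - 1) π)
      (max (if vs = 1 then 0 else c vs (π (vs - 1)) n) (⨆ v ∈ Finset.Icc (vs + 1) u, c v n n)) := by
  have htail' : ⨆ v ∈ Finset.Icc (vs + 1) u, c v (π (v - 1)) (π v) =
      ⨆ v ∈ Finset.Icc (vs + 1) u, c v n n :=
    biSup_congr fun v hv => by
      rw [Finset.mem_Icc] at hv
      rw [htail v (by omega) hv.2, htail (v - 1) (by omega) (by omega)]
  rcases eq_or_ne vs 1 with rfl | hvs
  · simpa [pairCost] using htail'
  · have hsplit : Finset.Icc 2 u = Finset.Icc 2 (vs - 1) ∪ insert vs (Finset.Icc (vs + 1) u) := by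
      ext v
      simp only [Finset.mem_union, Finset.mem_insert, Finset.mem_Icc]
      omega
    rw [pairCost, hsplit, Finset.iSup_union, Finset.iSup_insert, htail', if_neg hvs,
      htail vs le_rfl h2]
    rfl

theorem lineCost_split (hn : n ∈ Finset.Icc 1 N) (h1 : 1 ≤ vs) (h2 : vs ≤ u)
    (htail : ∀ v, vs ≤ v → v ≤ u → π v = n) (hhead : ∀ v, 1 ≤ v → v < vs → π v ≠ n) :
    lineCost N K d c u π =
      max (lineCost N K d c (vs - 1) π)
        (max (⨆ k ∈ Finset.Icc 1 K, ∑ v ∈ Finset.Icc vs u, d v n k)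
          (max (if vs = 1 then 0 else c vs (π (vs - 1)) n)
            (⨆ v ∈ Finset.Icc (vs + 1) u, c v n n))) := by
  rw [lineCost_eq_max, lineCost_eq_max, resourceLoad_split hn h1 h2 htail hhead,
    pairCost_split h1 h2 htail, max_max_max_comm]

theorem lineCost_congr {π' : ℕ → ℕ} (h : ∀ v, 1 ≤ v → v ≤ u → π v = π' v) :
    lineCost N K d c u π = lineCost N K d c u π' := by
  unfold lineCost
  congr 1
  · refine biSup_congr fun k _ => biSup_congr fun n _ => Finset.sum_congr ?_ fun _ _ => rfl
    exact Finset.filter_congr fun v hv => by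
      rw [Finset.mem_Icc] at hv
      rw [h v hv.1 hv.2]
  · refine biSup_congr fun v hv => ?_
    rw [Finset.mem_Icc] at hv
    rw [h v (by omega) hv.2, h (v - 1) (by omega) (by omega)]

theorem lineCost_zero : lineCost N K d c 0 π = 0 := by
  simp [lineCost]

def IsLinePlacement (N u n : ℕ) (π : ℕ → ℕ) : Prop :=
  (∀ v ∈ Finset.Icc 1 u, π v ∈ Finset.Icc 1 N) ∧
    (∀ v w, 1 ≤ v → v ≤ w → w ≤ u → π v ≤ π w) ∧ π u = n

theorem lineOpt_eq_iInf (hu : u ≠ 0) :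
    lineOpt N K d c u n = ⨅ (π) (_ : IsLinePlacement N u n π), lineCost N K d c u π :=
  if_neg hu

theorem lineOpt_le_lineCost (hu : u ≠ 0) (hπ : IsLinePlacement N u n π) :
    lineOpt N K d c u n ≤ lineCost N K d c u π :=
  (lineOpt_eq_iInf hu).trans_le (iInf₂_le π hπ)

theorem le_lineOpt {a : ℝ≥0∞} (hu : u ≠ 0)
    (h : ∀ π, IsLinePlacement N u n π → a ≤ lineCost N K d c u π) : a ≤ lineOpt N K d c u n :=
  (le_iInf₂ h).trans_eq (lineOpt_eq_iInf hu).symm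

theorem isLinePlacement_const (hn : n ∈ Finset.Icc 1 N) : IsLinePlacement N u n (fun _ => n) :=
  ⟨fun _ _ => hn, fun _ _ _ _ _ => le_rfl, rfl⟩

theorem IsLinePlacement.restrict (hπ : IsLinePlacement N u n π) {w : ℕ} (hw : w ≤ u) :
    IsLinePlacement N w (π w) π :=
  ⟨fun v hv => hπ.1 v (Finset.Icc_subset_Icc_right hw hv),
    fun v w' h1 h2 h3 => hπ.2.1 v w' h1 h2 (h3.trans hw), rfl⟩

theorem IsLinePlacement.extend {m : ℕ} (hπ : IsLinePlacement N (vs - 1) m π) (hmn : m ≤ n)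
    (hn : n ∈ Finset.Icc 1 N) (hvs : vs ≤ u) :
    IsLinePlacement N u n (fun v => if v < vs then π v else n) := by
  obtain ⟨hrange, hmono, hend⟩ := hπ
  refine ⟨fun v hv => ?_, fun v w h1 h2 h3 => ?_, if_neg (by omega)⟩
  · dsimp only
    split_ifs with h
    · exact hrange v (by simp only [Finset.mem_Icc] at hv ⊢; omega)
    · exact hn
  · dsimp only
    split_ifs with hv hw hw
    · exact hmono v w h1 h2 (by omega)
    · exact (hmono v (vs - 1) h1 (by omega) le_rfl).trans (hend ▸ hmn)
    · omega
    · exact le_rfl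

theorem IsLinePlacement.exists_first_hit (hπ : IsLinePlacement N u n π) (hu : 1 ≤ u) :
    ∃ vs ∈ Finset.Icc 1 u, (∀ v, vs ≤ v → v ≤ u → π v = n) ∧ ∀ v, 1 ≤ v → v < vs → π v < n := by
  classical
  obtain ⟨-, hmono, hend⟩ := hπ
  have hhit : ∃ v, 1 ≤ v ∧ π v = n := ⟨u, hu, hend⟩
  obtain ⟨h1, hvs⟩ := Nat.find_spec hhit
  have hle : Nat.find hhit ≤ u := Nat.find_min' hhit ⟨hu, hend⟩
  refine ⟨Nat.find hhit, Finset.mem_Icc.mpr ⟨h1, hle⟩, fun v h h' => ?_, fun v h h' => ?_⟩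
  · have := hmono _ _ h1 h h'
    have := hmono v u (h1.trans h) h' le_rfl
    omega
  · have := hmono v u h (h'.le.trans hle) le_rfl
    have := Nat.find_min hhit h'
    omega

noncomputable def bellmanTerm (N K : ℕ) (d : ℕ → ℕ → ℕ → ℝ≥0∞) (c : ℕ → ℕ → ℕ → ℝ≥0∞)
    (u n vs : ℕ) : ℝ≥0∞ :=
  if vs = 1 then
    max (⨆ k ∈ Finset.Icc 1 K, ∑ v ∈ Finset.Icc vs u, d v n k)
      (⨆ v ∈ Finset.Icc (vs + 1) u, c v n n)
  else
    ⨅ m ∈ Finset.Icc 1 (n - 1),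
      max (lineOpt N K d c (vs - 1) m)
        (max (⨆ k ∈ Finset.Icc 1 K, ∑ v ∈ Finset.Icc vs u, d v n k)
          (max (c vs m n) (⨆ v ∈ Finset.Icc (vs + 1) u, c v n n)))

theorem lineOpt_le_bellmanTerm (hn : n ∈ Finset.Icc 1 N) (hvs : vs ∈ Finset.Icc 1 u) :
    lineOpt N K d c u n ≤ bellmanTerm N K d c u n vs := by
  obtain ⟨h1, h2⟩ := Finset.mem_Icc.mp hvs
  have hu : u ≠ 0 := by omega
  unfold bellmanTerm
  split_ifs with hvs1
  · subst hvs1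
    refine (lineOpt_le_lineCost hu (isLinePlacement_const hn)).trans_eq ?_
    rw [lineCost_split hn le_rfl h2 (fun _ _ _ => rfl) (fun v h h' => by omega)]
    simp [lineCost_zero]
  refine le_iInf₂ fun m hm => ?_
  have hmn : m < n := by
    have := Finset.mem_Icc.mp hm; have := Finset.mem_Icc.mp hn
    omega
  rw [lineOpt_eq_iInf (by omega : vs - 1 ≠ 0)]
  simp only [iInf_sup_eq]
  refine le_iInf₂ fun π hπ => ?_
  have hhead : ∀ v, 1 ≤ v → v < vs → π v < n := fun v h h' =>
    (hπ.2.1 v (vs - 1) h (by omega) le_rfl).trans_lt (hπ.2.2 ▸ hmn)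
  refine (lineOpt_le_lineCost hu (hπ.extend hmn.le hn h2)).trans_eq ?_
  rw [lineCost_split hn h1 h2 (fun v h h' => if_neg (by omega))
      (fun v h h' => by simpa only [if_pos h'] using (hhead v h h').ne),
    lineCost_congr (π' := π) (fun v _ h' => if_pos (by omega)), if_neg hvs1,
    if_pos (by omega : vs - 1 < vs), hπ.2.2]

theorem iInf_bellmanTerm_le_lineCost (hn : n ∈ Finset.Icc 1 N) (hu : 1 ≤ u)
    (hπ : IsLinePlacement N u n π) :
    ⨅ vs ∈ Finset.Icc 1 u, bellmanTerm N K d c u n vs ≤ lineCost N K d c u π := by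
  obtain ⟨vs, hvs, htail, hhead⟩ := hπ.exists_first_hit hu
  obtain ⟨h1, h2⟩ := Finset.mem_Icc.mp hvs
  refine iInf₂_le_of_le vs hvs ?_
  rw [lineCost_split hn h1 h2 htail fun v h h' => (hhead v h h').ne]
  unfold bellmanTerm
  split_ifs with hvs1
  · subst hvs1
    simp [lineCost_zero]
  have hm := hhead (vs - 1) (by omega) (by omega)
  have hm1 := (Finset.mem_Icc.mp (hπ.1 (vs - 1) (Finset.mem_Icc.mpr ⟨by omega, by omega⟩))).1
  refine iInf₂_le_of_le (π (vs - 1)) (Finset.mem_Icc.mpr ⟨hm1, by omega⟩) ?_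
  gcongr
  exact lineOpt_le_lineCost (by omega) (hπ.restrict (by omega))

end LinePlacement

/-- Bellman recurrence, Proposition 1: for every `v₁ ∈ {1,…,V}` and every
physical node `n ∈ {1,…,N}`, `J*(v₁ | n)` equals the minimum over `v_s ∈ {1,…,v₁}` and
(when `v_s > 1`) over `m ∈ {1,…,n−1}` of
`max( J*(v_s−1 | m) ; max_k Σ_{v=v_s}^{v₁} d(v,n,k) ; c(v_s,m,n) ;
      max_{v_s+1 ≤ v ≤ v₁} c(v,n,n) )`,
where for `v_s = 1` the terms `J*(v_s−1 | m)` and `c(v_s,m,n)` are omitted and no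
minimization over `m` is performed. -/
theorem lineOpt_bellman (V N K : ℕ) (d : ℕ → ℕ → ℕ → ℝ≥0∞) (c : ℕ → ℕ → ℕ → ℝ≥0∞)
    (v₁ n : ℕ) (hv : v₁ ∈ Finset.Icc 1 V) (hn : n ∈ Finset.Icc 1 N) :
    lineOpt N K d c v₁ n =
      ⨅ vs ∈ Finset.Icc 1 v₁,
        if vs = 1 then
          max (⨆ k ∈ Finset.Icc 1 K, ∑ v ∈ Finset.Icc vs v₁, d v n k)
              (⨆ v ∈ Finset.Icc (vs + 1) v₁, c v n n)
        else
          ⨅ m ∈ Finset.Icc 1 (n - 1),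
            max (lineOpt N K d c (vs - 1) m)
              (max (⨆ k ∈ Finset.Icc 1 K, ∑ v ∈ Finset.Icc vs v₁, d v n k)
                (max (c vs m n)
                  (⨆ v ∈ Finset.Icc (vs + 1) v₁, c v n n))) := by
  obtain ⟨hv₁, -⟩ := Finset.mem_Icc.mp hv
  exact le_antisymm (le_iInf₂ fun vs hvs => lineOpt_le_bellmanTerm hn hvs)
    (le_lineOpt (by omega) fun π hπ => iInf_bellmanTerm_le_lineCost hn hv₁ hπ)
end

section
/- Suppose (i) for every request i ∈ {1,…,M}, the online choice has no larger exponential incremental cost than the offline choice: Σ_{r ∈ R} (α^{z_r(i−1) + w_i(r)} − α^{z_r(i−1)}) ≤ Σ_{r ∈ R} (α^{z_r(i−1) + w^o_i(r)} − α^{z_r(i−1)}); and (ii) the offline solution's final loads satisfy z^o_r(M) ≤ 1 for all r ∈ R. Then the online loads satisfy z_r(M) ≤ log_α( γ·|R| / (γ−1) ) for every r ∈ R. (This is the abstract normalized form of Proposition 3: if there exists an offline mapping with maximum weighted cost at most Ĵ, then the online algorithm's maximum load on every node and link never exceeds β·Ĵ with β = log_α(γ(NK+L)/(γ−1)).) 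-/
/-!
The proof is a potential-function argument. With `γ (α - 1) = 1`, the potential
`Φ = ∑ r, α ^ z r * (γ - zo r)` does not increase from one request to the next: the online
term grows by at most `γ` times the online exponential increment, which by the greedy choice is
at most `γ` times the offline one, and Bernoulli's inequality `α ^ u ≤ 1 + u (α - 1)` for
`u ∈ [0, 1]` bounds the latter by
`∑ r, α ^ z r * wo r`, exactly what the offline term loses. Hence `Φ M ≤ Φ 0 = γ |R|`, while
`zo M ≤ 1` gives `Φ M ≥ (γ - 1) α ^ z M r` for every `r`.
-/

open Finset Real

noncomputable def loadPotential {R : Type*} [Fintype R] (γ α : ℝ) (z zo : R → ℝ) : ℝ :=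
  ∑ r, α ^ z r * (γ - zo r)

theorem mul_rpow_add_sub_rpow_le {γ α x u : ℝ} (hα : 0 < α) (hγ : 0 ≤ γ)
    (hγα : γ * (α - 1) ≤ 1) (hu₀ : 0 ≤ u) (hu₁ : u ≤ 1) :
    γ * (α ^ (x + u) - α ^ x) ≤ α ^ x * u := by
  have bernoulli : α ^ u ≤ 1 + u * (α - 1) := by
    simpa using rpow_one_add_le_one_add_mul_self (s := α - 1) (by linarith) hu₀ hu₁
  have hγu : γ * (α ^ u - 1) ≤ u :=
    calc γ * (α ^ u - 1) ≤ γ * (u * (α - 1)) := by gcongr; linarith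
      _ = u * (γ * (α - 1)) := by ring
      _ ≤ u := mul_le_of_le_one_right hu₀ hγα
  calc γ * (α ^ (x + u) - α ^ x) = α ^ x * (γ * (α ^ u - 1)) := by rw [rpow_add hα]; ring
    _ ≤ α ^ x * u := by gcongr

section

variable {R : Type*} [Fintype R]

theorem loadPotential_zero (γ α : ℝ) :
    loadPotential γ α (0 : R → ℝ) 0 = γ * Fintype.card R := by
  simp [loadPotential, mul_comm]

theorem loadPotential_add_le {γ α : ℝ} (hα : 1 ≤ α) (hγ : 0 ≤ γ) (hγα : γ * (α - 1) ≤ 1)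
    {z zo w wo : R → ℝ} (hw : ∀ r, 0 ≤ w r) (hwo : ∀ r, 0 ≤ wo r) (hwo₁ : ∀ r, wo r ≤ 1)
    (hzo : ∀ r, 0 ≤ zo r + wo r)
    (hgreedy : ∑ r, (α ^ (z r + w r) - α ^ z r) ≤ ∑ r, (α ^ (z r + wo r) - α ^ z r)) :
    loadPotential γ α (z + w) (zo + wo) ≤ loadPotential γ α z zo := by
  have online : ∑ r, (α ^ (z r + w r) - α ^ z r) * (γ - (zo r + wo r)) ≤
      γ * ∑ r, (α ^ (z r + w r) - α ^ z r) := by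
    rw [mul_sum]
    refine sum_le_sum fun r _ => ?_
    have : α ^ z r ≤ α ^ (z r + w r) := rpow_le_rpow_of_exponent_le hα (by linarith [hw r])
    nlinarith [hzo r]
  have offline : γ * ∑ r, (α ^ (z r + wo r) - α ^ z r) ≤ ∑ r, α ^ z r * wo r := by
    rw [mul_sum]
    exact sum_le_sum fun r _ =>
      mul_rpow_add_sub_rpow_le (by linarith) hγ hγα (hwo r) (hwo₁ r)
  have expand : loadPotential γ α (z + w) (zo + wo) = loadPotential γ α z zo +
      ∑ r, (α ^ (z r + w r) - α ^ z r) * (γ - (zo r + wo r)) - ∑ r, α ^ z r * wo r := by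
    simp only [loadPotential, Pi.add_apply, ← sum_add_distrib, ← sum_sub_distrib]
    exact sum_congr rfl fun r _ => by ring
  linarith [mul_le_mul_of_nonneg_left hgreedy hγ]

theorem mul_rpow_le_loadPotential {γ α : ℝ} (hα : 0 ≤ α) {z zo : R → ℝ}
    (hzo : ∀ r, zo r ≤ 1) (hγ : 1 ≤ γ) (r : R) :
    (γ - 1) * α ^ z r ≤ loadPotential γ α z zo :=
  calc (γ - 1) * α ^ z r ≤ α ^ z r * (γ - zo r) := by
        nlinarith [rpow_nonneg hα (z r), hzo r]
    _ ≤ loadPotential γ α z zo :=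
        single_le_sum (f := fun r => α ^ z r * (γ - zo r))
          (fun r _ => mul_nonneg (rpow_nonneg hα _) (by linarith [hzo r])) (mem_univ r)

theorem loadPotential_le_of_greedy {γ α : ℝ} (hα : 1 ≤ α) (hγ : 0 ≤ γ)
    (hγα : γ * (α - 1) ≤ 1) {M : ℕ} {z zo w wo : ℕ → R → ℝ}
    (hz₀ : z 0 = 0) (hzo₀ : zo 0 = 0)
    (hz : ∀ i, z (i + 1) = z i + w i) (hzo : ∀ i, zo (i + 1) = zo i + wo i)
    (hw : ∀ i r, 0 ≤ w i r) (hwo : ∀ i r, 0 ≤ wo i r) (hwo₁ : ∀ i < M, ∀ r, wo i r ≤ 1)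
    (hgreedy : ∀ i < M, ∑ r, (α ^ (z i r + w i r) - α ^ z i r) ≤
      ∑ r, (α ^ (z i r + wo i r) - α ^ z i r)) :
    loadPotential γ α (z M) (zo M) ≤ γ * Fintype.card R := by
  have hzo_nonneg : ∀ i r, 0 ≤ zo i r := by
    intro i r
    induction i with
    | zero => simp [hzo₀]
    | succ i ih => rw [hzo]; exact add_nonneg ih (hwo i r)
  suffices ∀ i ≤ M, loadPotential γ α (z i) (zo i) ≤ γ * Fintype.card R from this M le_rfl
  intro i hi
  induction i with
  | zero => rw [hz₀, hzo₀, loadPotential_zero]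
  | succ i ih =>
    rw [hz, hzo]
    refine (loadPotential_add_le hα hγ hγα (hw i) (hwo i) (hwo₁ i hi) ?_ (hgreedy i hi)).trans
      (ih (by omega))
    intro r
    simpa [hzo] using hzo_nonneg (i + 1) r

end

theorem online_load_bound_general {R : Type*} [Fintype R]
    (γ α : ℝ) (hγ : 1 < γ) (hα : α = 1 + 1/γ)
    (M : ℕ) (w wo : ℕ → R → ℝ)
    (hw : ∀ i r, 0 ≤ w i r) (hwo : ∀ i r, 0 ≤ wo i r)
    (z zo : ℕ → R → ℝ)
    (hz : ∀ i r, z i r = ∑ j ∈ Finset.range i, w j r)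
    (hzo : ∀ i r, zo i r = ∑ j ∈ Finset.range i, wo j r)
    (hstep : ∀ i < M,
      ∑ r : R, (α ^ (z i r + w i r) - α ^ (z i r)) ≤
        ∑ r : R, (α ^ (z i r + wo i r) - α ^ (z i r)))
    (hoff : ∀ r, zo M r ≤ 1) :
    ∀ r, z M r ≤ Real.logb α (γ * (Fintype.card R) / (γ - 1)) := by
  have hα₁ : 1 < α := by
    rw [hα, lt_add_iff_pos_right]
    positivity
  have hγα : γ * (α - 1) = 1 := by rw [hα]; field_simp; ring
  have hwo₁ : ∀ i < M, ∀ r, wo i r ≤ 1 := fun i hi r =>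
    (single_le_sum (fun j _ => hwo j r) (mem_range.mpr hi)).trans (hzo M r ▸ hoff r)
  have hΦ := loadPotential_le_of_greedy (z := z) (zo := zo) hα₁.le (by linarith) hγα.le
    (funext fun r => by simp [hz]) (funext fun r => by simp [hzo])
    (fun i => funext fun r => by simp [hz, sum_range_succ])
    (fun i => funext fun r => by simp [hzo, sum_range_succ]) hw hwo hwo₁ hstep
  intro r
  have hpow : α ^ z M r ≤ γ * Fintype.card R / (γ - 1) := by
    rw [le_div_iff₀ (by linarith), mul_comm]
    exact (mul_rpow_le_loadPotential (by linarith) hoff hγ.le r).trans hΦ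
  calc z M r = logb α (α ^ z M r) := (logb_rpow (by linarith) hα₁.ne').symm
    _ ≤ logb α (γ * Fintype.card R / (γ - 1)) :=
      logb_le_logb_of_le hα₁ (rpow_pos_of_pos (by linarith) _) hpow

/-- abstract normalized form of Proposition 3: let `γ > 1`, `α = 1 + 1/γ`,
`R` a nonempty finite set of elements, and `M` requests with nonnegative online increments
`w i` and offline increments `wo i` (requests indexed by `i ∈ {0,…,M−1}`), cumulative loads
`z i r = Σ_{j<i} w j r` and `zo i r = Σ_{j<i} wo j r`.  If (i) for every request the online
choice has no larger exponential incremental cost than the offline choice, and (ii) the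
offline final loads satisfy `zo M r ≤ 1` for all `r`, then the online loads satisfy
`z M r ≤ log_α(γ·|R|/(γ−1))` for every `r`. -/
theorem online_load_bound {R : Type*} [Fintype R] [Nonempty R]
    (γ α : ℝ) (hγ : 1 < γ) (hα : α = 1 + 1/γ)
    (M : ℕ) (w wo : ℕ → R → ℝ)
    (hw : ∀ i r, 0 ≤ w i r) (hwo : ∀ i r, 0 ≤ wo i r)
    (z zo : ℕ → R → ℝ)
    (hz : ∀ i r, z i r = ∑ j ∈ Finset.range i, w j r)
    (hzo : ∀ i r, zo i r = ∑ j ∈ Finset.range i, wo j r)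
    (hstep : ∀ i < M,
      ∑ r : R, (α ^ (z i r + w i r) - α ^ (z i r)) ≤
        ∑ r : R, (α ^ (z i r + wo i r) - α ^ (z i r)))
    (hoff : ∀ r, zo M r ≤ 1) :
    ∀ r, z M r ≤ Real.logb α (γ * (Fintype.card R) / (γ - 1)) :=
  online_load_bound_general γ α hγ hα M w wo hw hwo z zo hz hzo hstep hoff
end

section
/- Let γ > 1, α = 1 + 1/γ, let R be a finite set, and let z, s, w, w^o : R → ℝ be nonnegative functions with w^o_r ≤ 1 for all r ∈ R. If Σ_{r ∈ R} (α^{z_r + w_r} − α^{z_r}) ≤ Σ_{r ∈ R} (α^{z_r + w^o_r} − α^{z_r}), then the potential function Φ = Σ_{r ∈ R} α^{z_r} (γ − s_r) does not increase after the step, i.e. Σ_{r ∈ R} α^{z_r + w_r} (γ − s_r − w^o_r) ≤ Σ_{r ∈ R} α^{z_r} (γ − s_r). -/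
open scoped BigOperators

/-- Key convexity lemma: for `1 ≤ α` and `x ∈ [0,1]`, `α ^ x ≤ 1 + x * (α - 1)`. -/
lemma rpow_le_one_add_mul_of_le_one {α x : ℝ} (hα : 1 ≤ α) (hx0 : 0 ≤ x) (hx1 : x ≤ 1) :
    α ^ x ≤ 1 + x * (α - 1) := by
  have hαpos : (0 : ℝ) < α := lt_of_lt_of_le one_pos hα
  have h := convexOn_exp.2 (Set.mem_univ (0 : ℝ)) (Set.mem_univ (Real.log α))
    (by linarith : (0:ℝ) ≤ 1 - x) hx0 (by ring)
  simp only [smul_eq_mul, mul_zero, zero_add, Real.exp_zero, Real.exp_log hαpos] at h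
  calc α ^ x = Real.exp (x * Real.log α) := by
        rw [Real.rpow_def_of_pos hαpos, mul_comm]
    _ ≤ (1 - x) * 1 + x * α := h
    _ = 1 + x * (α - 1) := by ring

/-- single-step potential inequality in the proof of Proposition 3:
let `γ > 1`, `α = 1 + 1/γ`, `R` a finite set, and `z, s, w, wo : R → ℝ` nonnegative with
`wo r ≤ 1` for all `r`.  If
`Σ_r (α^{z_r + w_r} − α^{z_r}) ≤ Σ_r (α^{z_r + wo_r} − α^{z_r})`,
then the potential `Φ = Σ_r α^{z_r}(γ − s_r)` does not increase:
`Σ_r α^{z_r + w_r}(γ − s_r − wo_r) ≤ Σ_r α^{z_r}(γ − s_r)`. -/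
theorem potential_nonincreasing {R : Type*} [Fintype R]
    (γ α : ℝ) (hγ : 1 < γ) (hα : α = 1 + 1/γ)
    (z s w wo : R → ℝ)
    (hz : ∀ r, 0 ≤ z r) (hs : ∀ r, 0 ≤ s r)
    (hw : ∀ r, 0 ≤ w r) (hwo : ∀ r, 0 ≤ wo r) (hwo1 : ∀ r, wo r ≤ 1)
    (hstep : ∑ r : R, (α ^ (z r + w r) - α ^ (z r)) ≤
      ∑ r : R, (α ^ (z r + wo r) - α ^ (z r))) :
    ∑ r : R, α ^ (z r + w r) * (γ - s r - wo r) ≤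
      ∑ r : R, α ^ (z r) * (γ - s r) := by
  have hγ0 : (0 : ℝ) < γ := lt_trans one_pos hγ
  have hα1 : 1 < α := by
    have h1γ : 0 < 1/γ := by positivity
    rw [hα]; linarith
  -- Step 1: Σ (α^{z+w} - α^z)(γ - s) ≤ γ Σ (α^{z+w} - α^z)
  have h1 : ∀ r : R, (α ^ (z r + w r) - α ^ (z r)) * (γ - s r) ≤
      γ * (α ^ (z r + w r) - α ^ (z r)) := by
    intro r
    have hnn : 0 ≤ α ^ (z r + w r) - α ^ (z r) := by
      have := Real.rpow_le_rpow_of_exponent_le hα1.le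
        (by linarith [hw r] : z r ≤ z r + w r)
      linarith
    nlinarith [hs r]
  -- Step 2: γ (α^{z+wo} - α^z) ≤ α^z * wo ≤ α^{z+w} * wo
  have h2 : ∀ r : R, γ * (α ^ (z r + wo r) - α ^ (z r)) ≤ α ^ (z r + w r) * wo r := by
    intro r
    have hz0 : (0 : ℝ) < α ^ (z r) := Real.rpow_pos_of_pos (by linarith) _
    have hkey : α ^ (wo r) ≤ 1 + wo r * (α - 1) :=
      rpow_le_one_add_mul_of_le_one hα1.le (hwo r) (hwo1 r)
    have hsplit : α ^ (z r + wo r) = α ^ (z r) * α ^ (wo r) :=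
      Real.rpow_add (by linarith) _ _
    have hαm1 : α - 1 = 1/γ := by rw [hα]; ring
    have hle : γ * (α ^ (z r + wo r) - α ^ (z r)) ≤ α ^ (z r) * wo r := by
      rw [hsplit]
      have : α ^ (z r) * α ^ (wo r) - α ^ (z r) ≤ α ^ (z r) * (wo r * (α - 1)) := by
        nlinarith
      calc γ * (α ^ (z r) * α ^ (wo r) - α ^ (z r))
          ≤ γ * (α ^ (z r) * (wo r * (α - 1))) := by nlinarith
        _ = α ^ (z r) * wo r := by rw [hαm1]; field_simp
    refine hle.trans ?_
    have : α ^ (z r) ≤ α ^ (z r + w r) :=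
      Real.rpow_le_rpow_of_exponent_le hα1.le (by linarith [hw r])
    nlinarith [hwo r]
  -- Combine
  have hmain : ∑ r : R, α ^ (z r + w r) * (γ - s r - wo r) -
      ∑ r : R, α ^ (z r) * (γ - s r)
      = ∑ r : R, (α ^ (z r + w r) - α ^ (z r)) * (γ - s r)
        - ∑ r : R, α ^ (z r + w r) * wo r := by
    rw [← Finset.sum_sub_distrib, ← Finset.sum_sub_distrib]
    apply Finset.sum_congr rfl; intro r _; ring
  have hA : ∑ r : R, (α ^ (z r + w r) - α ^ (z r)) * (γ - s r) ≤
      γ * ∑ r : R, (α ^ (z r + w r) - α ^ (z r)) := by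
    rw [Finset.mul_sum]; exact Finset.sum_le_sum fun r _ => h1 r
  have hB : γ * ∑ r : R, (α ^ (z r + wo r) - α ^ (z r)) ≤
      ∑ r : R, α ^ (z r + w r) * wo r := by
    rw [Finset.mul_sum]; exact Finset.sum_le_sum fun r _ => h2 r
  have hC : γ * ∑ r : R, (α ^ (z r + w r) - α ^ (z r)) ≤
      γ * ∑ r : R, (α ^ (z r + wo r) - α ^ (z r)) :=
    mul_le_mul_of_nonneg_left hstep hγ0.le
  linarith
end

section
/- Let B > 0, N ≥ 1, V ∈ ℕ, and let a : Fin V → ℝ be item costs with 0 ≤ a_v ≤ B for all v and Σ_v a_v ≤ N·B. Then there exists a nondecreasing map τ : Fin V → Fin (2N) such that every bin load satisfies Σ_{v : τ(v) = n} a_v ≤ B, i.e., the items can be packed in their given order into at most 2N bins of capacity B. -/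
/-!
Pack the items greedily in their given order ("next fit"): put the next item into the open
bin if it still fits, otherwise open a new bin. Every bin then has load at most `B`, and a bin
is only closed when its load plus the next item exceeds `B`, so any two consecutive bins
together carry more than `B`. With `k` the index of the open bin this is the invariant
`k * B < 2 * (total load)` for `k > 0`; a total load of at most `N * B` therefore forces
`k < 2 * N`.
-/

open Finset

namespace NextFit

variable (B : ℝ) (a : ℕ → ℝ)

/-- The pair (index of the open bin, its load) after packing the items `0, …, v - 1`. -/
noncomputable def state : ℕ → ℕ × ℝ
  | 0 => (0, 0)
  | v + 1 =>
    if (state v).2 + a v ≤ B then ((state v).1, (state v).2 + a v) else ((state v).1 + 1, a v)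

noncomputable def bin (v : ℕ) : ℕ := (state B a (v + 1)).1

variable {B a}

lemma state_succ_of_le {v : ℕ} (h : (state B a v).2 + a v ≤ B) :
    state B a (v + 1) = ((state B a v).1, (state B a v).2 + a v) := by
  rw [state, if_pos h]

lemma state_succ_of_lt {v : ℕ} (h : B < (state B a v).2 + a v) :
    state B a (v + 1) = ((state B a v).1 + 1, a v) := by
  rw [state, if_neg h.not_ge]

variable (B a)

lemma monotone_fst_state : Monotone fun v => (state B a v).1 := by
  refine monotone_nat_of_le_succ fun v => ?_
  rcases le_or_gt ((state B a v).2 + a v) B with h | h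
  · simp [state_succ_of_le h]
  · simp [state_succ_of_lt h]

lemma bin_le_fst_state {w v : ℕ} (hwv : w < v) : bin B a w ≤ (state B a v).1 :=
  monotone_fst_state B a hwv

lemma snd_state_le (hB : 0 ≤ B) (haB : ∀ v, a v ≤ B) (v : ℕ) : (state B a v).2 ≤ B := by
  induction v with
  | zero => exact hB
  | succ v ih =>
    rcases le_or_gt ((state B a v).2 + a v) B with h | h
    · rwa [state_succ_of_le h]
    · rw [state_succ_of_lt h]
      exact haB v

lemma filter_bin_eq_of_lt {v n : ℕ} (hn : (state B a v).1 < n) :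
    (range v).filter (fun w => bin B a w = n) = ∅ :=
  filter_false_of_mem fun _ hw => ((bin_le_fst_state B a (mem_range.mp hw)).trans_lt hn).ne

lemma sum_bin_eq_snd_state (v : ℕ) :
    ∑ w ∈ (range v).filter (fun w => bin B a w = (state B a v).1), a w = (state B a v).2 := by
  induction v with
  | zero => rfl
  | succ v ih =>
    have hv : bin B a v = (state B a (v + 1)).1 := rfl
    rw [range_add_one, filter_insert, if_pos hv, sum_insert (by simp)]
    rcases le_or_gt ((state B a v).2 + a v) B with h | h
    · rw [state_succ_of_le h, ih, add_comm]
    · rw [state_succ_of_lt h, filter_bin_eq_of_lt B a (Nat.lt_succ_self _)]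
      simp

lemma sum_bin_le (hB : 0 ≤ B) (haB : ∀ v, a v ≤ B) (v n : ℕ) :
    ∑ w ∈ (range v).filter (fun w => bin B a w = n), a w ≤ B := by
  induction v with
  | zero => simpa using hB
  | succ v ih =>
    by_cases hv : bin B a v = n
    · subst hv
      exact (sum_bin_eq_snd_state B a (v + 1)).trans_le (snd_state_le B a hB haB (v + 1))
    · rwa [range_add_one, filter_insert, if_neg hv]

lemma fst_state_mul_add_snd_le (ha0 : ∀ v, 0 ≤ a v) (v : ℕ) :
    (state B a v).1 * B + (state B a v).2 ≤ 2 * ∑ w ∈ range v, a w := by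
  induction v with
  | zero => simp [state]
  | succ v ih =>
    rw [sum_range_succ]
    have := ha0 v
    rcases le_or_gt ((state B a v).2 + a v) B with h | h
    · rw [state_succ_of_le h]
      linarith
    · rw [state_succ_of_lt h]
      push_cast
      linarith

lemma fst_state_mul_lt (ha0 : ∀ v, 0 ≤ a v) (v : ℕ) (hv : 0 < (state B a v).1) :
    (state B a v).1 * B < 2 * ∑ w ∈ range v, a w := by
  induction v with
  | zero => simp [state] at hv
  | succ v ih =>
    rw [sum_range_succ]
    have := ha0 v
    rcases le_or_gt ((state B a v).2 + a v) B with h | h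
    · rw [state_succ_of_le h] at hv ⊢
      linarith [ih hv]
    · rw [state_succ_of_lt h]
      push_cast
      linarith [fst_state_mul_add_snd_le B a ha0 v]

end NextFit

lemma Fin.sum_filter_univ_eq_sum_filter_range {M : Type*} [AddCommMonoid M] (V : ℕ)
    (p : ℕ → Prop) [DecidablePred p] (f : ℕ → M) :
    ∑ v ∈ univ.filter (fun v : Fin V => p v), f v = ∑ w ∈ (range V).filter p, f w := by
  simp only [sum_filter]
  exact Fin.sum_univ_eq_sum_range (fun w => if p w then f w else 0) V

open NextFit in
/-- order-preserving first-fit bin packing bound: let `B > 0`, `N ≥ 1`, and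
items `a : Fin V → ℝ` with `0 ≤ a v ≤ B` and `Σ_v a v ≤ N·B`.  Then there is a
nondecreasing map `τ : Fin V → Fin (2N)` whose every bin load satisfies
`Σ_{v : τ v = n} a v ≤ B`; i.e., the items can be packed in their given order into at
most `2N` bins of capacity `B`. -/
theorem ordered_bin_packing (B : ℝ) (hB : 0 < B) (N V : ℕ) (hN : 1 ≤ N)
    (a : Fin V → ℝ) (ha0 : ∀ v, 0 ≤ a v) (haB : ∀ v, a v ≤ B)
    (hsum : ∑ v, a v ≤ (N : ℝ) * B) :
    ∃ τ : Fin V → Fin (2 * N), Monotone τ ∧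
      ∀ n : Fin (2 * N), ∑ v ∈ Finset.univ.filter (fun v => τ v = n), a v ≤ B := by
  obtain ⟨b, hb, hb0, hbB⟩ : ∃ b : ℕ → ℝ, (∀ v : Fin V, b v = a v) ∧ (∀ w, 0 ≤ b w) ∧
      ∀ w, b w ≤ B :=
    ⟨fun w => if h : w < V then a ⟨w, h⟩ else 0, fun v => dif_pos v.isLt,
      fun w => by dsimp only; split_ifs <;> simp [ha0], fun w => by dsimp only; split_ifs <;> simp [haB, hB.le]⟩
  have hbsum : ∑ w ∈ range V, b w = ∑ v, a v := by
    simp only [← Fin.sum_univ_eq_sum_range, hb]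
  have hlast : (state B b V).1 < 2 * N := by
    by_contra! h
    have hlt := fst_state_mul_lt B b hb0 V (by omega)
    have : ((2 * N : ℕ) : ℝ) * B ≤ (state B b V).1 * B := by gcongr
    push_cast at this
    linarith
  refine ⟨fun v => ⟨bin B b v, (bin_le_fst_state B b v.isLt).trans_lt hlast⟩,
    fun v w hvw => monotone_fst_state B b (Nat.succ_le_succ hvw), fun n => ?_⟩
  calc _ = ∑ v ∈ univ.filter (fun v : Fin V => bin B b v = n.val), b v := by
        simp only [Fin.ext_iff, hb]
    _ = ∑ w ∈ (range V).filter (fun w => bin B b w = n.val), b w :=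
        Fin.sum_filter_univ_eq_sum_filter_range V (fun w => bin B b w = n.val) b
    _ ≤ B := sum_bin_le B b hB.le hbB V n
end

section
/- Let a : Fin V → ℝ with a_v ≥ 0 for all v, let N ≥ 1, and suppose there exists an arbitrary (unordered) assignment σ : Fin V → Fin N with maximum bin load OPT = max_n Σ_{v : σ(v) = n} a_v. Then there exists a nondecreasing map τ : Fin V → Fin N with max_n Σ_{v : τ(v) = n} a_v ≤ 2·OPT. That is, when each application node has the same cost on every physical node, cycle-free (order-preserving) line-to-line placement has approximation ratio at most 2. -/
set_option maxHeartbeats 1000000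

open scoped BigOperators

/-- Proposition: approximation ratio 2 of ordered placement: let
`a : Fin V → ℝ` be nonnegative item costs, `N ≥ 1`, and `σ : Fin V → Fin N` an arbitrary
(unordered) assignment with maximum bin load `OPT`.  Then there exists a nondecreasing
map `τ : Fin V → Fin N` whose maximum bin load is at most `2·OPT`. -/
theorem ordered_placement_ratio_two (V N : ℕ) (hN : 1 ≤ N)
    (a : Fin V → ℝ) (ha : ∀ v, 0 ≤ a v)
    (σ : Fin V → Fin N) (OPT : ℝ)
    (hOPT : OPT = ⨆ n : Fin N, ∑ v ∈ Finset.univ.filter (fun v => σ v = n), a v) :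
    ∃ τ : Fin V → Fin N, Monotone τ ∧
      (⨆ n : Fin N, ∑ v ∈ Finset.univ.filter (fun v => τ v = n), a v) ≤ 2 * OPT := by
  classical
  haveI : Nonempty (Fin N) := ⟨⟨0, hN⟩⟩
  have hNpos : (0:ℝ) < N := by exact_mod_cast hN
  have hbdd : ∀ τ : Fin V → Fin N,
      BddAbove (Set.range fun n => ∑ v ∈ Finset.univ.filter (fun v => τ v = n), a v) :=
    fun τ => (Set.finite_range _).bddAbove
  have hOPT_ge : ∀ n, (∑ v ∈ Finset.univ.filter (fun v => σ v = n), a v) ≤ OPT := by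
    intro n; rw [hOPT]; exact le_ciSup (hbdd σ) n
  have hOPT0 : 0 ≤ OPT :=
    le_trans (Finset.sum_nonneg fun v _ => ha v) (hOPT_ge ⟨0, hN⟩)
  have haOPT : ∀ v, a v ≤ OPT := by
    intro v
    refine le_trans ?_ (hOPT_ge (σ v))
    exact Finset.single_le_sum (fun w _ => ha w) (by simp)
  obtain ⟨T, hTdef⟩ : ∃ T : ℝ, T = ∑ v, a v := ⟨_, rfl⟩
  have hT0 : 0 ≤ T := hTdef ▸ Finset.sum_nonneg fun v _ => ha v
  have hTN : T ≤ N * OPT := by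
    have h1 : ∑ n : Fin N, ∑ v ∈ Finset.univ.filter (fun v => σ v = n), a v = T := by
      rw [hTdef, Finset.sum_fiberwise_eq_sum_filter]; simp
    calc T = ∑ n : Fin N, ∑ v ∈ Finset.univ.filter (fun v => σ v = n), a v := h1.symm
      _ ≤ ∑ _n : Fin N, OPT := Finset.sum_le_sum fun n _ => hOPT_ge n
      _ = N * OPT := by simp [mul_comm]
  obtain ⟨P, hPdef⟩ : ∃ P : Fin V → ℝ, ∀ v, P v = ∑ w ∈ Finset.Iio v, a w :=
    ⟨_, fun _ => rfl⟩
  have hPmono : Monotone P := by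
    intro v v' hv
    rw [hPdef, hPdef]
    exact Finset.sum_le_sum_of_subset_of_nonneg
      (Finset.Iio_subset_Iio hv) (fun w _ _ => ha w)
  have hP_le_T : ∀ v : Fin V, P v + a v ≤ T := by
    intro v
    have h1 : ∑ w ∈ Finset.Iic v, a w ≤ T := by
      rw [hTdef]
      exact Finset.sum_le_sum_of_subset_of_nonneg (Finset.subset_univ _) (fun w _ _ => ha w)
    rw [← Finset.Iio_insert, Finset.sum_insert (by simp)] at h1
    rw [hPdef]; linarith
  have hIic : ∀ v : Fin V, ∑ w ∈ Finset.Iic v, a w = P v + a v := by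
    intro v
    rw [← Finset.Iio_insert, Finset.sum_insert (by simp), hPdef]; ring
  rcases eq_or_lt_of_le hT0 with hTz | hTpos
  · -- T = 0 : every load is 0
    refine ⟨fun _ => ⟨0, hN⟩, monotone_const, ?_⟩
    refine ciSup_le fun n => ?_
    have h1 : (∑ v ∈ Finset.univ.filter (fun v => (⟨0, hN⟩ : Fin N) = n), a v) ≤ T := by
      rw [hTdef]
      exact Finset.sum_le_sum_of_subset_of_nonneg (Finset.subset_univ _) (fun w _ _ => ha w)
    nlinarith
  · -- main case
    obtain ⟨f, hfdef⟩ : ∃ f : Fin V → ℕ, ∀ v, f v = ⌊P v * N / T⌋₊ := ⟨_, fun _ => rfl⟩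
    obtain ⟨τ, hτdef⟩ : ∃ τ : Fin V → Fin N, ∀ v, (τ v : ℕ) = min (f v) (N - 1) :=
      ⟨fun v => ⟨min (f v) (N - 1), Nat.lt_of_le_of_lt (min_le_right _ _) (by omega)⟩,
        fun _ => rfl⟩
    have hPNT_nonneg : ∀ v, 0 ≤ P v * N / T := by
      intro v
      have : 0 ≤ P v := by rw [hPdef]; exact Finset.sum_nonneg fun w _ => ha w
      positivity
    have hτmono : Monotone τ := by
      intro v v' hv
      have h1 : P v * N / T ≤ P v' * N / T := by
        apply div_le_div_of_nonneg_right _ hT0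
        · exact mul_le_mul_of_nonneg_right (hPmono hv) hNpos.le
      have h2 : f v ≤ f v' := by rw [hfdef, hfdef]; exact Nat.floor_le_floor h1
      rw [Fin.le_def, hτdef, hτdef]
      omega
    refine ⟨τ, hτmono, ciSup_le fun n => ?_⟩
    rcases (Finset.univ.filter (fun v => τ v = n)).eq_empty_or_nonempty with hSe | hSne
    · rw [hSe]; simp; nlinarith
    · obtain ⟨vmin, hvmin⟩ : ∃ v, v = (Finset.univ.filter (fun v => τ v = n)).min' hSne :=
        ⟨_, rfl⟩
      obtain ⟨vmax, hvmax⟩ : ∃ v, v = (Finset.univ.filter (fun v => τ v = n)).max' hSne :=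
        ⟨_, rfl⟩
      have hmem : ∀ v ∈ Finset.univ.filter (fun v => τ v = n), τ v = n := by
        intro v hv; simpa using hv
      have hτmin : min (f vmin) (N-1) = (n:ℕ) := by
        rw [← hτdef]
        exact congrArg Fin.val (hmem _ (hvmin ▸ Finset.min'_mem _ hSne))
      have hτmax : min (f vmax) (N-1) = (n:ℕ) := by
        rw [← hτdef]
        exact congrArg Fin.val (hmem _ (hvmax ▸ Finset.max'_mem _ hSne))
      have hnN : (n:ℕ) < N := n.isLt
      -- lower bound on P vmin
      have hfmin : (n:ℕ) ≤ f vmin := by omega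
      have h1 : (n:ℝ) * T ≤ P vmin * N := by
        have hx : (n:ℝ) ≤ P vmin * N / T := by
          calc (n:ℝ) ≤ (f vmin : ℝ) := by exact_mod_cast hfmin
            _ = (⌊P vmin * N / T⌋₊ : ℝ) := by rw [hfdef]
            _ ≤ P vmin * N / T := Nat.floor_le (hPNT_nonneg vmin)
        calc (n:ℝ) * T ≤ (P vmin * N / T) * T := by nlinarith
          _ = P vmin * N := by field_simp
      -- upper bound on P vmax
      have h2 : P vmax * N ≤ ((n:ℝ) + 1) * T := by
        rcases lt_or_ge (n:ℕ) (N-1) with hc | hc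
        · have hfmax : f vmax < (n:ℕ) + 1 := by omega
          rw [hfdef] at hfmax
          have hx : P vmax * N / T < ((n:ℕ):ℝ) + 1 := by
            have := (Nat.floor_lt (hPNT_nonneg vmax)).1 hfmax
            push_cast at this
            linarith
          have := mul_le_mul_of_nonneg_right hx.le hT0
          calc P vmax * N = (P vmax * N / T) * T := by field_simp
            _ ≤ (((n:ℕ):ℝ) + 1) * T := this
        · have hn1 : (n:ℕ) + 1 = N := by omega
          have hPT : P vmax ≤ T := by have := hP_le_T vmax; have := ha vmax; linarith
          have he : ((n:ℝ) + 1) = (N:ℝ) := by exact_mod_cast hn1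
          rw [he]
          nlinarith
      -- sum over S
      have hsub : Finset.univ.filter (fun v => τ v = n) ⊆ Finset.Iic vmax \ Finset.Iio vmin := by
        intro v hv
        simp only [Finset.mem_sdiff, Finset.mem_Iic, Finset.mem_Iio, not_lt]
        exact ⟨hvmax ▸ Finset.le_max' _ v hv, hvmin ▸ Finset.min'_le _ v hv⟩
      have hminmax : vmin ≤ vmax := by
        rw [hvmin, hvmax]
        exact Finset.min'_le _ _ (Finset.max'_mem _ hSne)
      have hsub2 : Finset.Iio vmin ⊆ Finset.Iic vmax := by
        intro x hx
        simp only [Finset.mem_Iio] at hx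
        simp only [Finset.mem_Iic]
        exact le_trans hx.le hminmax
      have hsum : ∑ v ∈ Finset.univ.filter (fun v => τ v = n), a v
          ≤ P vmax + a vmax - P vmin := by
        calc ∑ v ∈ Finset.univ.filter (fun v => τ v = n), a v
            ≤ ∑ v ∈ Finset.Iic vmax \ Finset.Iio vmin, a v :=
              Finset.sum_le_sum_of_subset_of_nonneg hsub (fun w _ _ => ha w)
          _ = ∑ v ∈ Finset.Iic vmax, a v - ∑ v ∈ Finset.Iio vmin, a v :=
              Finset.sum_sdiff_eq_sub hsub2
          _ = P vmax + a vmax - P vmin := by rw [hIic vmax, hPdef vmin]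
      -- conclude
      have key : (N:ℝ) * (P vmax - P vmin) ≤ T := by nlinarith
      have h3 : (N:ℝ) * (∑ v ∈ Finset.univ.filter (fun v => τ v = n), a v - a vmax)
          ≤ (N:ℝ) * OPT := by nlinarith
      have h4 : ∑ v ∈ Finset.univ.filter (fun v => τ v = n), a v - a vmax ≤ OPT :=
        le_of_mul_le_mul_left (by linarith) hNpos
      have := haOPT vmax
      linarith
end

section
/- Let ρ ≥ 1 and let d : Fin V → Fin N → ℝ be node-placement costs with 0 ≤ d(v,n) and d(v,n) ≤ ρ·d(v,m) for all v, n, m (i.e., the maximum-to-minimum ratio of placement costs of each application node across physical nodes is at most ρ). Let σ : Fin V → Fin N be any assignment and let OPT = max_n Σ_{v : σ(v) = n} d(v,n) be its maximum node load. Then for every physical node n₀, the assignment placing all application nodes on n₀ (which is cycle-free) has node load Σ_v d(v,n₀) ≤ ρ·V·OPT. -/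
open scoped BigOperators

/-- Corollary: node-cost approximation ratio of cycle-free placement:
let `ρ ≥ 1` and let `d : Fin V → Fin N → ℝ` be nonnegative node-placement costs with
`d v n ≤ ρ · d v m` for all `v, n, m`.  Let `σ : Fin V → Fin N` be any assignment with
maximum node load `OPT = max_n Σ_{v : σ v = n} d v n`.  Then for every physical node
`n₀`, the (cycle-free) assignment placing all application nodes on `n₀` has node load
`Σ_v d v n₀ ≤ ρ·V·OPT`. -/
theorem all_on_one_node_bound (V N : ℕ) (ρ : ℝ) (hρ : 1 ≤ ρ)
    (d : Fin V → Fin N → ℝ)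
    (hd0 : ∀ v n, 0 ≤ d v n)
    (hdρ : ∀ v (n m : Fin N), d v n ≤ ρ * d v m)
    (σ : Fin V → Fin N) (OPT : ℝ)
    (hOPT : OPT = ⨆ n : Fin N, ∑ v ∈ Finset.univ.filter (fun v => σ v = n), d v n) :
    ∀ n₀ : Fin N, ∑ v : Fin V, d v n₀ ≤ ρ * (V : ℝ) * OPT := by
  intro n₀
  have hN : Nonempty (Fin N) := ⟨n₀⟩
  have hOPTle : ∀ n : Fin N,
      (∑ v ∈ Finset.univ.filter (fun v => σ v = n), d v n) ≤ OPT := by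
    intro n
    rw [hOPT]
    exact le_ciSup (f := fun n : Fin N => ∑ v ∈ Finset.univ.filter (fun v => σ v = n), d v n) (Set.Finite.bddAbove (Set.finite_range _)) n
  have key : ∀ v : Fin V, d v n₀ ≤ ρ * OPT := by
    intro v
    calc d v n₀ ≤ ρ * d v (σ v) := hdρ v n₀ (σ v)
    _ ≤ ρ * OPT := by
        apply mul_le_mul_of_nonneg_left _ (by linarith)
        calc d v (σ v)
            ≤ ∑ w ∈ Finset.univ.filter (fun w => σ w = σ v), d w (σ v) :=
              Finset.single_le_sum (f := fun w => d w (σ v)) (fun w _ => hd0 w _) (Finset.mem_filter.mpr ⟨Finset.mem_univ v, rfl⟩)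
          _ ≤ OPT := hOPTle (σ v)
    _ = ρ * OPT := rfl
  calc ∑ v : Fin V, d v n₀ ≤ ∑ _v : Fin V, ρ * OPT := Finset.sum_le_sum (fun v _ => key v)
    _ = (V : ℝ) * (ρ * OPT) := by simp [mul_comm]
    _ = ρ * (V : ℝ) * OPT := by ring
end
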